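/- arXiv:2309.01792 — 3 statements merged into one kernel-verified Lean document; each statement's English description precedes it below -/
import Mathlib

section
/- Let k ≥ 3 be an odd integer, set λ = (k−1)/2, let m be a prime and ℓ an odd prime, let a : ℕ → ℤ be a sequence and Λ ∈ ℤ, and suppose that for every n ≥ 1: a(ℓ²n) + ℓ^{λ−1}·((−1)^λ n / ℓ)·a(n) + ℓ^{2λ−1}·a(n/ℓ²) ≡ Λ·a(n) (mod m), where ((−1)^λ n / ℓ) is the Legendre symbol (equal to 0 when ℓ ∣ n) and a(n/ℓ²) is interpreted as 0 when ℓ² ∤ n. If Λ ≡ 0 (mod m), then a(ℓ³n) ≡ 0 (mod m) for every positive integer n coprime to ℓ. -/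
theorem stmt_5 (k : ℕ) (hk : 3 ≤ k) (hkodd : Odd k)
    (m : ℕ) (hm : m.Prime) (ℓ : ℕ) (hℓ : ℓ.Prime) (hℓodd : Odd ℓ)
    (a : ℕ → ℤ) (Λ : ℤ)
    (heigen : ∀ n : ℕ, 1 ≤ n →
      a (ℓ ^ 2 * n) + (ℓ : ℤ) ^ ((k - 1) / 2 - 1) *
          jacobiSym ((-1) ^ ((k - 1) / 2) * (n : ℤ)) ℓ * a n +
        (ℓ : ℤ) ^ (2 * ((k - 1) / 2) - 1) * (if ℓ ^ 2 ∣ n then a (n / ℓ ^ 2) else 0) ≡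
          Λ * a n [ZMOD (m : ℤ)])
    (hΛ : Λ ≡ 0 [ZMOD (m : ℤ)]) :
    ∀ n : ℕ, 0 < n → Nat.Coprime n ℓ → (m : ℤ) ∣ a (ℓ ^ 3 * n) := by
  intro n hn hcop
  have hℓpos : 0 < ℓ := hℓ.pos
  have h := heigen (ℓ * n) (Nat.one_le_iff_ne_zero.2 (by positivity))
  have hjac : jacobiSym ((-1) ^ ((k - 1) / 2) * ((ℓ * n : ℕ) : ℤ)) ℓ = 0 := by
    apply jacobiSym.eq_zero_iff.2
    refine ⟨hℓpos.ne', ?_⟩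
    intro hco
    have hd : (ℓ : ℤ) ∣ (-1) ^ ((k - 1) / 2) * ((ℓ * n : ℕ) : ℤ) := by
      push_cast; exact (dvd_mul_right (ℓ : ℤ) (n : ℤ)).mul_left _
    have : (ℓ : ℕ) ∣ Int.gcd ((-1) ^ ((k - 1) / 2) * ((ℓ * n : ℕ) : ℤ)) ℓ :=
      Nat.dvd_gcd (Int.natAbs_dvd_natAbs.2 (by simpa using hd)) dvd_rfl
    rw [hco] at this
    exact hℓ.one_lt.ne' (Nat.dvd_one.mp this)
  have hdvd : ¬ (ℓ ^ 2 ∣ ℓ * n) := by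
    intro hd
    have hln : ℓ ∣ n := (mul_dvd_mul_iff_left hℓpos.ne').mp (by rwa [sq] at hd)
    have : ℓ ∣ 1 := hcop ▸ Nat.dvd_gcd hln dvd_rfl
    exact hℓ.one_lt.ne' (Nat.dvd_one.mp this)
  rw [hjac, if_neg hdvd] at h
  have heq : ℓ ^ 2 * (ℓ * n) = ℓ ^ 3 * n := by ring
  rw [heq] at h
  simp only [mul_zero, zero_mul, add_zero, mul_zero] at h
  have hfin : a (ℓ ^ 3 * n) ≡ 0 [ZMOD (m : ℤ)] := by
    calc a (ℓ ^ 3 * n) ≡ Λ * a (ℓ * n) [ZMOD (m : ℤ)] := h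
    _ ≡ 0 * a (ℓ * n) [ZMOD (m : ℤ)] := hΛ.mul_right _
    _ = 0 := by ring
  exact (Int.modEq_zero_iff_dvd).mp hfin
end

section
/- Let k ≥ 3 be an odd integer, set λ = (k−1)/2, let m be a prime and ℓ an odd prime, let a : ℕ → ℤ be a sequence and Λ ∈ ℤ, and suppose that for every n ≥ 1: a(ℓ²n) + ℓ^{λ−1}·((−1)^λ n / ℓ)·a(n) + ℓ^{2λ−1}·a(n/ℓ²) ≡ Λ·a(n) (mod m), where ((−1)^λ n / ℓ) is the Legendre symbol (equal to 0 when ℓ ∣ n) and a(n/ℓ²) is interpreted as 0 when ℓ² ∤ n. If there exists ε ∈ {1,−1} with Λ ≡ ε·ℓ^{(k−3)/2} (mod m), then a(ℓ²n) ≡ 0 (mod m) for every positive integer n coprime to ℓ such that ((−1)^λ n / ℓ) = ε. -/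
theorem stmt_6 (k : ℕ) (hk : 3 ≤ k) (hkodd : Odd k)
    (m : ℕ) (hm : m.Prime) (ℓ : ℕ) (hℓ : ℓ.Prime) (hℓodd : Odd ℓ)
    (a : ℕ → ℤ) (Λ : ℤ)
    (heigen : ∀ n : ℕ, 1 ≤ n →
      a (ℓ ^ 2 * n) + (ℓ : ℤ) ^ ((k - 1) / 2 - 1) *
          jacobiSym ((-1) ^ ((k - 1) / 2) * (n : ℤ)) ℓ * a n +
        (ℓ : ℤ) ^ (2 * ((k - 1) / 2) - 1) * (if ℓ ^ 2 ∣ n then a (n / ℓ ^ 2) else 0) ≡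
          Λ * a n [ZMOD (m : ℤ)])
    (ε : ℤ) (hε : ε = 1 ∨ ε = -1)
    (hΛ : Λ ≡ ε * (ℓ : ℤ) ^ ((k - 3) / 2) [ZMOD (m : ℤ)]) :
    ∀ n : ℕ, 0 < n → Nat.Coprime n ℓ →
      jacobiSym ((-1) ^ ((k - 1) / 2) * (n : ℤ)) ℓ = ε →
      (m : ℤ) ∣ a (ℓ ^ 2 * n) := by
  intro n hn hcop hjac
  have hnd : ¬ ℓ ^ 2 ∣ n := by
    intro h
    have hln : ℓ ∣ n := dvd_trans (dvd_pow_self ℓ two_ne_zero) h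
    exact hℓ.one_lt.ne' (Nat.Coprime.eq_one_of_dvd hcop.symm hln)
  have he : (k - 1) / 2 - 1 = (k - 3) / 2 := by omega
  have h := heigen n hn
  rw [if_neg hnd, hjac, he] at h
  obtain ⟨c, hc⟩ := Int.ModEq.dvd h
  obtain ⟨d, hd⟩ := Int.ModEq.dvd hΛ
  exact ⟨-c - a n * d, by linear_combination (-1 : ℤ) * hc - a n * hd⟩
end

section
/- Let p be an odd prime and λ a positive integer such that (p−1) divides 2λ. Then (2/p)^{2λ/(p−1)} ≡ 2^λ (mod p^{v_p(λ)+1}), where (2/p) is the Legendre symbol and v_p(λ) is the p-adic valuation of λ. -/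
set_option linter.unnecessarySimpa false


/-- `(2/p)^{2λ/(p−1)} ≡ 2^λ (mod p^{v_p(λ)+1})` for an odd prime `p` with `(p−1) ∣ 2λ`;
here the Legendre symbol `(2/p)` is expressed as the Jacobi symbol. -/
theorem stmt_18 (p : ℕ) (hp : p.Prime) (hpodd : Odd p)
    (lam : ℕ) (hlam : 0 < lam) (hdvd : (p - 1) ∣ 2 * lam) :
    jacobiSym 2 p ^ (2 * lam / (p - 1)) ≡ 2 ^ lam
      [ZMOD (p : ℤ) ^ (padicValNat p lam + 1)] := by
  haveI : Fact p.Prime := ⟨hp⟩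
  set v := padicValNat p lam with hv
  set l := lam / p ^ v with hl
  have hpv : p ^ v ∣ lam := pow_padicValNat_dvd
  have hlam_eq : lam = p ^ v * l := (Nat.mul_div_cancel' hpv).symm
  have hl_pos : 0 < l := Nat.div_pos (Nat.le_of_dvd hlam hpv) (pow_pos hp.pos v)
  -- coprimality of (p-1) and p^v
  have hcop : Nat.Coprime (p ^ v) (p - 1) := by
    apply Nat.Coprime.pow_left
    have h1 : Nat.Coprime (p - 1 + 1) (p - 1) := by
      simpa using Nat.coprime_succ_self_left
    have h2 : p - 1 + 1 = p := by have := hp.two_le; omega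
    rwa [h2] at h1
  have hdvd' : (p - 1) ∣ 2 * l := by
    have : (p - 1) ∣ p ^ v * (2 * l) := by
      rw [show p ^ v * (2 * l) = 2 * (p ^ v * l) by ring, ← hlam_eq]; exact hdvd
    exact (Nat.Coprime.dvd_of_dvd_mul_left hcop.symm this)
  set m := 2 * l / (p - 1) with hm
  have hp1pos : 0 < p - 1 := by have := hp.two_le; omega
  have hml : m * (p - 1) = 2 * l := Nat.div_mul_cancel hdvd'
  have hM : 2 * lam / (p - 1) = p ^ v * m := by
    rw [hlam_eq, show 2 * (p ^ v * l) = p ^ v * (2 * l) by ring,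
      Nat.mul_div_assoc _ hdvd']
  -- Euler's criterion base congruence modulo p
  have hbase : (jacobiSym 2 p) ^ m ≡ 2 ^ l [ZMOD (p : ℤ)] := by
    have h1 : ((jacobiSym 2 p : ℤ) : ZMod p) = (2 : ZMod p) ^ (p / 2) := by
      rw [← jacobiSym.legendreSym.to_jacobiSym]
      simpa using legendreSym.eq_pow p 2
    have hl2 : l = (p / 2) * m := by
      have hp2 : p / 2 = (p - 1) / 2 := by
        obtain ⟨k, hk⟩ := hpodd; omega
      have h2 : 2 ∣ p - 1 := by obtain ⟨k, hk⟩ := hpodd; omega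
      have : 2 * l = 2 * ((p/2) * m) := by
        rw [hml.symm, hp2]
        obtain ⟨t, ht⟩ := h2
        rw [ht]; rw [Nat.mul_div_cancel_left t (by norm_num)]; ring
      omega
    have := ZMod.intCast_eq_intCast_iff' ((jacobiSym 2 p) ^ m) (2 ^ l) p
    rw [← ZMod.intCast_eq_intCast_iff]
    push_cast
    rw [h1, hl2, pow_mul, ← pow_mul, mul_comm (p/2) m, pow_mul]
  -- lift via dvd_sub_pow_of_dvd_sub
  have hdsub : ((p : ℤ) ^ (v + 1)) ∣
      ((jacobiSym 2 p) ^ m) ^ p ^ v - ((2 : ℤ) ^ l) ^ p ^ v := by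
    have h := dvd_sub_pow_of_dvd_sub (p := p)
      (a := (jacobiSym 2 p : ℤ) ^ m) (b := (2:ℤ) ^ l)
      (Int.ModEq.dvd hbase.symm) v
    exact_mod_cast h
  rw [← pow_mul, ← pow_mul, mul_comm m (p ^ v), mul_comm l (p ^ v), ← hM, ← hlam_eq] at hdsub
  exact (Int.modEq_iff_dvd.mpr (by simpa using hdsub.neg_right)).symm.symm
end
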